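/- Let γ > 0 and let L be a 6-dimensional real Lie algebra with basis (e₁, …, e₆) whose Lie brackets among basis elements are determined by [e₁, e₃] = e₅, [e₁, e₄] = e₆, [e₂, e₃] = γe₆, [e₂, e₄] = e₅, with all other brackets of basis elements equal to zero (up to antisymmetry). Then there exists a basis (f₁, …, f₆) of L whose only nonzero brackets among basis elements (up to antisymmetry) are [f₁, f₂] = f₃ and [f₄, f₅] = f₆; in particular L is isomorphic to the direct sum 𝔥₃ ⊕ 𝔥₃ of two 3-dimensional Heisenberg Lie algebras. -/

import Mathlib

/-!
Put `s = √γ`. The elements `s e₀ ± e₁` and `e₂ ± s e₃` split the non-central part into two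
Heisenberg pairs: `⁅s e₀ + e₁, e₂ + s e₃⁆ = 2s e₄ + 2s² e₅` and `⁅s e₀ - e₁, e₂ - s e₃⁆ =
2s e₄ - 2s² e₅`, while the mixed brackets cancel because `⁅e₀, e₂⁆ = ⁅e₁, e₃⁆` and
`⁅e₁, e₂⁆ = s² ⁅e₀, e₃⁆`. Each pair `(a x + b y, a x - b y)` with `a, b ≠ 0` spans the same
plane as `(x, y)` once `2` is invertible, so the six new vectors form a basis.
-/

open Module Submodule

section

variable {K L : Type*} [Field K] [LieRing L] [LieAlgebra K L]

theorem lie_eq_zero_of_forall_lie_basis_eq_zero {ι : Type*} (b : Basis ι K L) {x : L}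
    (h : ∀ i, ⁅x, b i⁆ = 0) (y : L) : ⁅x, y⁆ = 0 := by
  have ad_eq_zero : LieAlgebra.ad K L x = 0 := b.ext h
  simpa using LinearMap.congr_fun ad_eq_zero y

theorem lie_eq_zero_of_heisenberg_pairs (f : Fin 6 → L)
    (h03 : ⁅f 0, f 3⁆ = 0) (h04 : ⁅f 0, f 4⁆ = 0) (h13 : ⁅f 1, f 3⁆ = 0) (h14 : ⁅f 1, f 4⁆ = 0)
    (h2 : ∀ x : L, ⁅f 2, x⁆ = 0) (h5 : ∀ x : L, ⁅f 5, x⁆ = 0) :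
    ∀ i j : Fin 6, i < j → ¬((i = 0 ∧ j = 1) ∨ (i = 3 ∧ j = 4)) → ⁅f i, f j⁆ = 0 := by
  have h2' : ∀ x, ⁅x, f 2⁆ = 0 := fun x ↦ by rw [← lie_skew, h2, neg_zero]
  have h5' : ∀ x, ⁅x, f 5⁆ = 0 := fun x ↦ by rw [← lie_skew, h5, neg_zero]
  intro i j hij hne
  fin_cases i <;> fin_cases j <;> simp_all

variable (K) in
def heisenbergPairFamily (s : K) (e : Fin 6 → L) : Fin 6 → L :=
  ![s • e 0 + e 1, e 2 + s • e 3, (2 * s) • e 4 + (2 * s ^ 2) • e 5,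
    s • e 0 - e 1, e 2 - s • e 3, (2 * s) • e 4 - (2 * s ^ 2) • e 5]

theorem top_le_span_heisenbergPairFamily (e : Basis (Fin 6) K L) {s : K} (hs : s ≠ 0)
    (h2 : (2 : K) ≠ 0) : ⊤ ≤ span K (Set.range (heisenbergPairFamily K s e)) := by
  set f := heisenbergPairFamily K s e
  have of_eq_smul_add {x : L} (c : K) (i j : Fin 6) (h : x = c • (f i + f j)) :
      x ∈ span K (Set.range f) :=
    h ▸ smul_mem _ _ (add_mem (subset_span ⟨i, rfl⟩) (subset_span ⟨j, rfl⟩))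
  have of_eq_smul_sub {x : L} (c : K) (i j : Fin 6) (h : x = c • (f i - f j)) :
      x ∈ span K (Set.range f) :=
    h ▸ smul_mem _ _ (sub_mem (subset_span ⟨i, rfl⟩) (subset_span ⟨j, rfl⟩))
  rw [← e.span_eq, span_le]
  rintro _ ⟨i, rfl⟩
  fin_cases i <;>
    [apply of_eq_smul_add (2 * s)⁻¹ 0 3; apply of_eq_smul_sub 2⁻¹ 0 3;
     apply of_eq_smul_add 2⁻¹ 1 4; apply of_eq_smul_sub (2 * s)⁻¹ 1 4;
     apply of_eq_smul_add (2 * (2 * s))⁻¹ 2 5; apply of_eq_smul_sub (2 * (2 * s ^ 2))⁻¹ 2 5] <;>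
    simp only [f, heisenbergPairFamily, Matrix.cons_val, Fin.reduceFinMk] <;>
    match_scalars <;> field_simp <;> ring

theorem heisenbergPairFamily_lie (s : K) (e : Fin 6 → L) (h01 : ⁅e 0, e 1⁆ = 0)
    (h02 : ⁅e 0, e 2⁆ = e 4) (h03 : ⁅e 0, e 3⁆ = e 5) (h12 : ⁅e 1, e 2⁆ = s ^ 2 • e 5)
    (h13 : ⁅e 1, e 3⁆ = e 4) (h23 : ⁅e 2, e 3⁆ = 0)
    (h4 : ∀ x : L, ⁅e 4, x⁆ = 0) (h5 : ∀ x : L, ⁅e 5, x⁆ = 0) :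
    let f := heisenbergPairFamily K s e
    ⁅f 0, f 1⁆ = f 2 ∧ ⁅f 3, f 4⁆ = f 5 ∧
      ∀ i j : Fin 6, i < j → ¬((i = 0 ∧ j = 1) ∨ (i = 3 ∧ j = 4)) → ⁅f i, f j⁆ = 0 := by
  intro f
  have h10 : ⁅e 1, e 0⁆ = 0 := by rw [← lie_skew, h01, neg_zero]
  have h32 : ⁅e 3, e 2⁆ = 0 := by rw [← lie_skew, h23, neg_zero]
  have h20 : ⁅e 2, e 0⁆ = -e 4 := by rw [← lie_skew, h02]
  have h21 : ⁅e 2, e 1⁆ = -(s ^ 2 • e 5) := by rw [← lie_skew, h12]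
  have h30 : ⁅e 3, e 0⁆ = -e 5 := by rw [← lie_skew, h03]
  have h31 : ⁅e 3, e 1⁆ = -e 4 := by rw [← lie_skew, h13]
  refine ⟨?_, ?_, lie_eq_zero_of_heisenberg_pairs f ?_ ?_ ?_ ?_ (fun x ↦ ?_) (fun x ↦ ?_)⟩ <;>
  · simp only [f, heisenbergPairFamily, Matrix.cons_val, lie_add, add_lie, lie_sub, sub_lie,
      lie_smul, smul_lie, lie_self, h01, h02, h03, h10, h12, h13, h20, h21, h23,
      h30, h31, h32, h4, h5]
    module

theorem exists_basis_lie_heisenberg_sum (e : Basis (Fin 6) K L) {s : K} (hs : s ≠ 0)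
    (h2 : (2 : K) ≠ 0) (h01 : ⁅e 0, e 1⁆ = 0) (h02 : ⁅e 0, e 2⁆ = e 4) (h03 : ⁅e 0, e 3⁆ = e 5)
    (h12 : ⁅e 1, e 2⁆ = s ^ 2 • e 5) (h13 : ⁅e 1, e 3⁆ = e 4) (h23 : ⁅e 2, e 3⁆ = 0)
    (h4 : ∀ x : L, ⁅e 4, x⁆ = 0) (h5 : ∀ x : L, ⁅e 5, x⁆ = 0) :
    ∃ f : Basis (Fin 6) K L, ⁅f 0, f 1⁆ = f 2 ∧ ⁅f 3, f 4⁆ = f 5 ∧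
      ∀ i j : Fin 6, i < j → ¬((i = 0 ∧ j = 1) ∨ (i = 3 ∧ j = 4)) → ⁅f i, f j⁆ = 0 := by
  refine ⟨basisOfTopLeSpanOfCardEqFinrank _ (top_le_span_heisenbergPairFamily e hs h2)
    (by rw [finrank_eq_card_basis e]), ?_⟩
  rw [coe_basisOfTopLeSpanOfCardEqFinrank]
  exact heisenbergPairFamily_lie s e h01 h02 h03 h12 h13 h23 h4 h5

end

/-- let `γ > 0` and let `L` be a 6-dimensional real Lie algebra with a basis
`(e₁, …, e₆)` whose only nonzero brackets (up to antisymmetry) are `[e₁,e₃] = e₅`,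
`[e₁,e₄] = e₆`, `[e₂,e₃] = γ e₆`, `[e₂,e₄] = e₅` (indices here start at 0 in the
formalization).  Then `L` has a basis `(f₁, …, f₆)` whose only nonzero brackets (up to
antisymmetry) are `[f₁,f₂] = f₃` and `[f₄,f₅] = f₆`; i.e. `L ≅ 𝔥₃ ⊕ 𝔥₃` is the direct
sum of two 3-dimensional Heisenberg algebras. -/
theorem morozov_sixth_family_decomposes
    (γ : ℝ) (hγ : 0 < γ)
    (L : Type*) [LieRing L] [LieAlgebra ℝ L]
    (e : Module.Basis (Fin 6) ℝ L)
    (h02 : ⁅e 0, e 2⁆ = e 4)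
    (h03 : ⁅e 0, e 3⁆ = e 5)
    (h12 : ⁅e 1, e 2⁆ = γ • e 5)
    (h13 : ⁅e 1, e 3⁆ = e 4)
    (hz : ∀ i j : Fin 6, i < j →
      ¬((i = 0 ∧ j = 2) ∨ (i = 0 ∧ j = 3) ∨ (i = 1 ∧ j = 2) ∨ (i = 1 ∧ j = 3)) →
      ⁅e i, e j⁆ = 0) :
    ∃ f : Module.Basis (Fin 6) ℝ L,
      ⁅f 0, f 1⁆ = f 2 ∧ ⁅f 3, f 4⁆ = f 5 ∧
      ∀ i j : Fin 6, i < j → ¬((i = 0 ∧ j = 1) ∨ (i = 3 ∧ j = 4)) → ⁅f i, f j⁆ = 0 := by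
  have central (k : Fin 6) (hk : 4 ≤ k) (x : L) : ⁅e k, x⁆ = 0 := by
    refine lie_eq_zero_of_forall_lie_basis_eq_zero e (fun i ↦ ?_) x
    rcases lt_trichotomy i k with hik | rfl | hki
    · rw [← lie_skew, hz i k hik (by omega), neg_zero]
    · exact lie_self _
    · exact hz k i hki (by omega)
  rw [← Real.sq_sqrt hγ.le] at h12
  exact exists_basis_lie_heisenberg_sum e (Real.sqrt_pos.2 hγ).ne' two_ne_zero
    (hz 0 1 (by decide) (by decide)) h02 h03 h12 h13 (hz 2 3 (by decide) (by decide))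
    (central 4 le_rfl) (central 5 (by decide))
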